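/- The function Φ is a positive, strictly increasing, twice differentiable solution of the eigenvalue equation of the Ornstein–Uhlenbeck generator: for every x ∈ ℝ, (σ̂²/2)·Φ''(x) + (c - βx)·Φ'(x) - δ·Φ(x) = 0. -/

import Mathlib

/-!
Differentiating under the integral sign gives `F_a' = -2 F_{a+1}`, and integrating
`d/dt (exp(-t² - 2xt) t^(a+1))` over `(0, ∞)` gives the recurrence
`(a + 1) F_a - 2x F_{a+1} - 2 F_{a+2} = 0`, i.e. the Hermite-type equation
`F_a'' - 2x F_a' - 2(a + 1) F_a = 0`. The affine substitution `u(x)` turns it into the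
eigenvalue equation, with `δ = β (a + 1)` and `(√β σ̂)² = β σ̂²`. Positivity of the integrand
gives `Φ > 0` and `Φ' = 2 (β / (√β σ̂)) F_{a+1}(u) > 0`.
-/

open MeasureTheory Real

/-- `Fa a x = ∫₀^∞ exp(-t² - 2xt) · t^a dt`, a Hermite-type function of negative degree. -/
noncomputable def Fa (a x : ℝ) : ℝ :=
  ∫ t in Set.Ioi (0 : ℝ), Real.exp (-(t ^ 2) - 2 * x * t) * t ^ a

/-- `Phi β σh δ c x = F_a(u(x))` with `a = δ/β - 1` and `u(x) = (c - βx)/(√β·σ̂)`. -/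
noncomputable def Phi (β σh δ c : ℝ) (x : ℝ) : ℝ :=
  Fa (δ / β - 1) ((c - β * x) / (Real.sqrt β * σh))

open Set Filter Metric
open scoped Topology

lemma exp_neg_sq_sub_mul_le (x t : ℝ) :
    exp (-(t ^ 2) - 2 * x * t) ≤ exp ((2 * x - 1) ^ 2 / 4) * exp (-t) := by
  rw [← exp_add]
  exact exp_le_exp.2 (by nlinarith [sq_nonneg (t + (2 * x - 1) / 2)])

lemma continuousOn_exp_neg_sq_sub_mul_rpow (a x : ℝ) :
    ContinuousOn (fun t : ℝ => exp (-(t ^ 2) - 2 * x * t) * t ^ a) (Ioi 0) :=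
  (by fun_prop : Continuous fun t : ℝ => exp (-(t ^ 2) - 2 * x * t)).continuousOn.mul
    fun t ht => (continuousAt_rpow_const _ _ (Or.inl (ne_of_gt ht))).continuousWithinAt

lemma integrableOn_exp_neg_sq_sub_mul_rpow {a : ℝ} (ha : -1 < a) (x : ℝ) :
    IntegrableOn (fun t : ℝ => exp (-(t ^ 2) - 2 * x * t) * t ^ a) (Ioi 0) := by
  have hGamma : IntegrableOn (fun t : ℝ => exp (-t) * t ^ a) (Ioi 0) := by
    simpa using GammaIntegral_convergent (s := a + 1) (by linarith)
  refine (hGamma.const_mul (exp ((2 * x - 1) ^ 2 / 4))).mono'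
    ((continuousOn_exp_neg_sq_sub_mul_rpow a x).aestronglyMeasurable measurableSet_Ioi) ?_
  filter_upwards [ae_restrict_mem measurableSet_Ioi] with t (ht : 0 < t)
  rw [norm_of_nonneg (by positivity), ← mul_assoc]
  gcongr
  exact exp_neg_sq_sub_mul_le x t

lemma tendsto_exp_neg_sq_sub_mul_rpow_atTop (a x : ℝ) :
    Tendsto (fun t : ℝ => exp (-(t ^ 2) - 2 * x * t) * t ^ a) atTop (𝓝 0) := by
  have hbound : Tendsto (fun t : ℝ => exp ((2 * x - 1) ^ 2 / 4) * (t ^ a * exp (-1 * t)))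
      atTop (𝓝 0) := by
    simpa using (tendsto_rpow_mul_exp_neg_mul_atTop_nhds_zero a 1 one_pos).const_mul
      (exp ((2 * x - 1) ^ 2 / 4))
  refine squeeze_zero' ?_ ?_ hbound
  · filter_upwards [eventually_gt_atTop 0] with t ht
    positivity
  · filter_upwards [eventually_gt_atTop 0] with t ht
    calc exp (-(t ^ 2) - 2 * x * t) * t ^ a
        ≤ exp ((2 * x - 1) ^ 2 / 4) * exp (-t) * t ^ a := by
          gcongr; exact exp_neg_sq_sub_mul_le x t
      _ = _ := by rw [neg_one_mul]; ring

lemma Fa_pos {a : ℝ} (ha : -1 < a) (x : ℝ) : 0 < Fa a x := by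
  have hnonneg : 0 ≤ᵐ[volume.restrict (Ioi 0)]
      fun t : ℝ => exp (-(t ^ 2) - 2 * x * t) * t ^ a := by
    filter_upwards [ae_restrict_mem measurableSet_Ioi] with t (ht : 0 < t)
    positivity
  rw [Fa, setIntegral_pos_iff_support_of_nonneg_ae hnonneg
    (integrableOn_exp_neg_sq_sub_mul_rpow ha x)]
  have hsupport : Function.support (fun t : ℝ => exp (-(t ^ 2) - 2 * x * t) * t ^ a) ∩ Ioi 0
      = Ioi 0 :=
    inter_eq_right.2 fun t (ht : 0 < t) => by simp only [Function.mem_support]; positivity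
  rw [hsupport]
  simp

lemma hasDerivAt_Fa {a : ℝ} (ha : -1 < a) (x₀ : ℝ) :
    HasDerivAt (Fa a) (-2 * Fa (a + 1) x₀) x₀ := by
  have hbound : ∀ᵐ t ∂volume.restrict (Ioi 0), ∀ x ∈ ball x₀ 1,
      ‖-2 * (exp (-(t ^ 2) - 2 * x * t) * t ^ (a + 1))‖ ≤
        2 * (exp (-(t ^ 2) - 2 * (x₀ - 1) * t) * t ^ (a + 1)) := by
    filter_upwards [ae_restrict_mem measurableSet_Ioi] with t (ht : 0 < t) x hx
    have hx' : x₀ - 1 ≤ x := by linarith [(abs_lt.1 (mem_ball_iff_norm.1 hx)).1]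
    rw [norm_mul, norm_of_nonneg (by positivity : 0 ≤ exp (-(t ^ 2) - 2 * x * t) * t ^ (a + 1))]
    norm_num
    gcongr
  have hderiv : ∀ᵐ t ∂volume.restrict (Ioi 0), ∀ x ∈ ball x₀ 1,
      HasDerivAt (fun y => exp (-(t ^ 2) - 2 * y * t) * t ^ a)
        (-2 * (exp (-(t ^ 2) - 2 * x * t) * t ^ (a + 1))) x := by
    filter_upwards [ae_restrict_mem measurableSet_Ioi] with t (ht : 0 < t) x _
    have hlin : HasDerivAt (fun y : ℝ => -(t ^ 2) - 2 * y * t) (-(2 * t)) x := by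
      simpa using (((hasDerivAt_id x).const_mul 2).mul_const t).const_sub (-(t ^ 2))
    refine (hlin.exp.mul_const (t ^ a)).congr_deriv ?_
    rw [rpow_add_one ht.ne']
    ring
  have hdom := hasDerivAt_integral_of_dominated_loc_of_deriv_le (ball_mem_nhds x₀ one_pos)
    (Eventually.of_forall fun x =>
      (continuousOn_exp_neg_sq_sub_mul_rpow a x).aestronglyMeasurable measurableSet_Ioi)
    (integrableOn_exp_neg_sq_sub_mul_rpow ha x₀)
    (((continuousOn_exp_neg_sq_sub_mul_rpow (a + 1) x₀).aestronglyMeasurable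
      measurableSet_Ioi).const_mul (-2))
    hbound ((integrableOn_exp_neg_sq_sub_mul_rpow (by linarith) (x₀ - 1)).const_mul 2) hderiv
  rw [integral_const_mul] at hdom
  exact hdom.2

lemma hasDerivAt_exp_neg_sq_sub_mul_rpow (a x : ℝ) {t : ℝ} (ht : 0 < t) :
    HasDerivAt (fun s : ℝ => exp (-(s ^ 2) - 2 * x * s) * s ^ (a + 1))
      ((a + 1) * (exp (-(t ^ 2) - 2 * x * t) * t ^ a)
        - 2 * x * (exp (-(t ^ 2) - 2 * x * t) * t ^ (a + 1))
        - 2 * (exp (-(t ^ 2) - 2 * x * t) * t ^ (a + 2))) t := by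
  have hquad : HasDerivAt (fun s : ℝ => -(s ^ 2) - 2 * x * s) (-(2 * t) - 2 * x) t := by
    have hsq : HasDerivAt (fun s : ℝ => s ^ 2) (2 * t) t := by simpa using hasDerivAt_pow 2 t
    exact hsq.neg.sub (hasDerivAt_const_mul (2 * x))
  have hpow : HasDerivAt (fun s : ℝ => s ^ (a + 1)) ((a + 1) * t ^ a) t := by
    simpa using hasDerivAt_rpow_const (p := a + 1) (Or.inl ht.ne')
  refine (hquad.exp.mul hpow).congr_deriv ?_
  simp only [show a + 2 = a + 1 + 1 by ring, rpow_add_one ht.ne']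
  ring

lemma Fa_recurrence {a : ℝ} (ha : -1 < a) (x : ℝ) :
    (a + 1) * Fa a x - 2 * x * Fa (a + 1) x - 2 * Fa (a + 2) x = 0 := by
  have hcont : ContinuousWithinAt (fun s : ℝ => exp (-(s ^ 2) - 2 * x * s) * s ^ (a + 1))
      (Ici 0) 0 :=
    ((by fun_prop : Continuous fun s : ℝ => exp (-(s ^ 2) - 2 * x * s)).continuousAt.mul
      (continuousAt_rpow_const _ _ (Or.inr (by linarith)))).continuousWithinAt
  have h0 := (integrableOn_exp_neg_sq_sub_mul_rpow ha x).const_mul (a + 1)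
  have h1 := (integrableOn_exp_neg_sq_sub_mul_rpow (a := a + 1) (by linarith) x).const_mul (2 * x)
  have h2 := (integrableOn_exp_neg_sq_sub_mul_rpow (a := a + 2) (by linarith) x).const_mul 2
  have hibp := integral_Ioi_of_hasDerivAt_of_tendsto hcont
    (fun t ht => hasDerivAt_exp_neg_sq_sub_mul_rpow a x ht) ((h0.sub h1).sub h2)
    (tendsto_exp_neg_sq_sub_mul_rpow_atTop (a + 1) x)
  rw [integral_sub, integral_sub, integral_const_mul, integral_const_mul, integral_const_mul,
    zero_rpow (by linarith : a + 1 ≠ 0)] at hibp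
  · simpa [Fa] using hibp
  exacts [h0, h1, h0.sub h1, h2]

lemma hasDerivAt_Fa_comp_affine {a : ℝ} (ha : -1 < a) (c β s x : ℝ) :
    HasDerivAt (fun y => Fa a ((c - β * y) / s))
      (2 * (β / s) * Fa (a + 1) ((c - β * x) / s)) x := by
  have haffine : HasDerivAt (fun y : ℝ => (c - β * y) / s) (-β / s) x := by
    simpa using ((hasDerivAt_const_mul β).const_sub c).div_const s
  refine ((hasDerivAt_Fa ha _).comp x haffine).congr_deriv ?_
  ring

lemma hasDerivAt_Phi {β σh δ c : ℝ} (ha : -1 < δ / β - 1) (x : ℝ) :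
    HasDerivAt (Phi β σh δ c)
      (2 * (β / (√β * σh)) * Fa (δ / β - 1 + 1) ((c - β * x) / (√β * σh))) x :=
  hasDerivAt_Fa_comp_affine ha c β _ x

lemma hasDerivAt_deriv_Phi {β σh δ c : ℝ} (ha : -1 < δ / β - 1) (x : ℝ) :
    HasDerivAt (deriv (Phi β σh δ c))
      (4 * (β / (√β * σh)) ^ 2 * Fa (δ / β - 1 + 2) ((c - β * x) / (√β * σh))) x := by
  rw [funext fun y => (hasDerivAt_Phi (σh := σh) (c := c) ha y).deriv]
  refine ((hasDerivAt_Fa_comp_affine (by linarith) c β _ x).const_mul _).congr_deriv ?_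
  rw [add_assoc, one_add_one_eq_two]
  ring

/-- `Φ` is a positive, strictly increasing, twice differentiable solution of
`(σ̂²/2)·Φ'' + (c - βx)·Φ' - δ·Φ = 0`, the eigenvalue equation of the OU generator. -/
theorem Phi_eigenfunction (β σh δ c : ℝ) (hβ : 0 < β) (hσ : 0 < σh) (hδ : 0 < δ) :
    (∀ x : ℝ, 0 < Phi β σh δ c x) ∧
    StrictMono (Phi β σh δ c) ∧
    Differentiable ℝ (Phi β σh δ c) ∧
    Differentiable ℝ (deriv (Phi β σh δ c)) ∧
    (∀ x : ℝ, σh ^ 2 / 2 * deriv (deriv (Phi β σh δ c)) x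
        + (c - β * x) * deriv (Phi β σh δ c) x - δ * Phi β σh δ c x = 0) := by
  have ha : -1 < δ / β - 1 := by linarith [div_pos hδ hβ]
  have hD1 := hasDerivAt_Phi (σh := σh) (c := c) ha
  have hD2 := hasDerivAt_deriv_Phi (σh := σh) (c := c) ha
  refine ⟨fun x => Fa_pos ha _, strictMono_of_deriv_pos fun x => ?_,
    fun x => (hD1 x).differentiableAt, fun x => (hD2 x).differentiableAt, fun x => ?_⟩
  · rw [(hD1 x).deriv]
    exact mul_pos (by positivity) (Fa_pos (by linarith) _)
  · rw [(hD2 x).deriv, (hD1 x).deriv]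
    set s := √β * σh
    set u := (c - β * x) / s
    have hs : s ≠ 0 := by positivity
    have hcx : c - β * x = u * s := (div_mul_cancel₀ _ hs).symm
    have hcoef2 : σh ^ 2 / 2 * (4 * (β / s) ^ 2) = 2 * β := by
      rw [div_pow, mul_pow, sq_sqrt hβ.le]
      field_simp
      ring
    have hcoef1 : s * (2 * (β / s)) = 2 * β := by field_simp
    have hδa : δ = β * (δ / β - 1 + 1) := by field_simp; ring
    have hPhi : Phi β σh δ c x = Fa (δ / β - 1) u := rfl
    rw [hPhi, hcx]
    linear_combination Fa (δ / β - 1 + 2) u * hcoef2 + u * Fa (δ / β - 1 + 1) u * hcoef1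
      - Fa (δ / β - 1) u * hδa - β * Fa_recurrence ha u
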